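/- Let σ be a cyclic permutation of [n], let C_1, …, C_n be the chain decomposition of the intervals along σ, and let A be a collection of intervals along σ that does not contain the skew-butterfly poset S as a weak subposet. If C_{i+1} is of type 4, type 3^L or type 3^S, then |A ∩ C_i| ≤ 1 (indices of chains taken modulo n). -/

import Mathlib

/-!
Label the interval of size `m` on the chain `C j` by `(j, m)`. For sizes `m ≥ 1`, the intervals
of `C j` are nested, an interval of `C i` lies in one of `C (i + 1)` as soon as its half-size
`⌊m / 2⌋` is smaller, and one of `C (i + 1)` lies in one of `C i` as soon as its half-size
`⌈m / 2⌉` is smaller. Given sizes `s₁ < s₂` of sets of `𝒜` on `C i` and `t₁ < t₂ < t₃` of sets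
of `𝒜` on `C (i + 1)` with `t₁ + 3 ≤ t₃` or `t₁` even, a case analysis of these half-sizes
always yields a skew butterfly among the five intervals. If `C (i + 1)` has type `4`, `3^S` or
`3^L`, its sizes contain such `t₁ < t₂ < t₃`, so `C i` meets `𝒜` at most once.
-/

open Finset

/-- The family `𝒜` contains the skew-butterfly poset `S` as a (weak) subposet:
five pairwise distinct sets `a, b, c, d, e ∈ 𝒜` with
`a ⊆ c`, `a ⊆ d`, `b ⊆ c`, `b ⊆ d` and `b ⊆ e ⊆ d`. -/
def ContainsSkewButterfly {n : ℕ} (𝒜 : Finset (Finset (Fin n))) : Prop :=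
  ∃ a b c d e : Finset (Fin n),
    a ∈ 𝒜 ∧ b ∈ 𝒜 ∧ c ∈ 𝒜 ∧ d ∈ 𝒜 ∧ e ∈ 𝒜 ∧
    a ≠ b ∧ a ≠ c ∧ a ≠ d ∧ a ≠ e ∧ b ≠ c ∧ b ≠ d ∧ b ≠ e ∧ c ≠ d ∧ c ≠ e ∧ d ≠ e ∧
    a ⊆ c ∧ a ⊆ d ∧ b ⊆ c ∧ b ⊆ d ∧ b ⊆ e ∧ e ⊆ d

/-- The interval `{x i, x (i+1), …, x (i+t)}` along the cyclic permutation `σ`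
(indices taken modulo `n`). -/
def cycInterval (n : ℕ) (σ : ZMod n ≃ Fin n) (i : ZMod n) (t : ℕ) : Finset (Fin n) :=
  (Finset.range (t + 1)).image fun s : ℕ => σ (i + (s : ZMod n))

/-- `I` is an interval along the cyclic permutation `σ`; neither `∅` nor `[n]`
is an interval. -/
def IsCycInterval (n : ℕ) (σ : ZMod n ≃ Fin n) (I : Finset (Fin n)) : Prop :=
  ∃ (i : ZMod n) (t : ℕ), t ≤ n - 2 ∧ I = cycInterval n σ i t

/-- The chain `C i` of the chain decomposition of the intervals along `σ`: it contains
exactly one interval of each size `1, 2, …, n - 1`, where the interval of size `2k` is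
`{x (i-k), …, x (i+k-1)}` and the interval of size `2k+1` is `{x (i-k), …, x (i+k)}`. -/
def chainC (n : ℕ) (σ : ZMod n ≃ Fin n) (i : ZMod n) : Finset (Finset (Fin n)) :=
  (Finset.Icc 1 (n - 1)).image fun m => cycInterval n σ (i - ((m / 2 : ℕ) : ZMod n)) (m - 1)

/-- The chain `C` is of type `3^S`: exactly `3` sets of `𝒜` on `C`, whose sizes are
not consecutive. -/
def Type3S {n : ℕ} (𝒜 C : Finset (Finset (Fin n))) : Prop :=
  (𝒜 ∩ C).card = 3 ∧ ¬ ∃ j : ℕ, (𝒜 ∩ C).image Finset.card = {j, j + 1, j + 2}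

/-- The chain `C` is of type `3^R`: exactly `3` sets of `𝒜` on `C`, with consecutive sizes
`j, j+1, j+2` where `j` is odd (two of the sets have odd size). -/
def Type3R {n : ℕ} (𝒜 C : Finset (Finset (Fin n))) : Prop :=
  (𝒜 ∩ C).card = 3 ∧ ∃ j : ℕ, Odd j ∧ (𝒜 ∩ C).image Finset.card = {j, j + 1, j + 2}

/-- The chain `C` is of type `3^L`: exactly `3` sets of `𝒜` on `C`, with consecutive sizes
`j, j+1, j+2` where `j` is even (two of the sets have even size). -/
def Type3L {n : ℕ} (𝒜 C : Finset (Finset (Fin n))) : Prop :=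
  (𝒜 ∩ C).card = 3 ∧ ∃ j : ℕ, Even j ∧ (𝒜 ∩ C).image Finset.card = {j, j + 1, j + 2}

section

variable {n : ℕ} {σ : ZMod n ≃ Fin n}

lemma mem_cycInterval {a : ZMod n} {t : ℕ} {x : Fin n} :
    x ∈ cycInterval n σ a t ↔ ∃ k ≤ t, σ (a + k) = x := by
  simp only [cycInterval, mem_image, mem_range, Nat.lt_succ_iff]

lemma cycInterval_subset_cycInterval {a a' : ZMod n} {t t' : ℕ} (d : ℕ)
    (ha : a = a' + d) (hd : d + t ≤ t') : cycInterval n σ a t ⊆ cycInterval n σ a' t' := by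
  intro x hx
  obtain ⟨k, hk, rfl⟩ := mem_cycInterval.mp hx
  exact mem_cycInterval.mpr ⟨d + k, by omega, by rw [ha]; push_cast; ring_nf⟩

lemma card_cycInterval (a : ZMod n) {t : ℕ} (ht : t < n) :
    (cycInterval n σ a t).card = t + 1 := by
  have : NeZero n := ⟨by omega⟩
  rw [cycInterval, card_image_of_injOn, card_range]
  intro x hx y hy hxy
  simp only [coe_range, Set.mem_Iio] at hx hy
  have h := congrArg ZMod.val (add_left_cancel (σ.injective hxy))
  rwa [ZMod.val_cast_of_lt (by omega), ZMod.val_cast_of_lt (by omega)] at h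

/-- If `a' = a + (k + 1)` with `k < t`, then `a' - 1` lies in the interval starting at `a` but not
in the one starting at `a'`. -/
lemma cycInterval_left_injective {a a' : ZMod n} {t : ℕ} (ht : t + 1 < n)
    (h : cycInterval n σ a t = cycInterval n σ a' t) : a = a' := by
  obtain ⟨k, hk, hka⟩ := mem_cycInterval.mp (h ▸ mem_cycInterval.mpr ⟨0, by omega, by simp⟩ :
    σ a' ∈ cycInterval n σ a t)
  obtain _ | k := k
  · simpa using σ.injective hka
  push_cast at hka
  obtain ⟨m, hm, hma⟩ := mem_cycInterval.mp (h ▸ mem_cycInterval.mpr ⟨k, by omega, rfl⟩ :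
    σ (a + k) ∈ cycInterval n σ a' t)
  have hzero : ((m + 1 : ℕ) : ZMod n) = 0 := by
    push_cast
    linear_combination σ.injective hma + σ.injective hka
  have := Nat.le_of_dvd (by omega) ((ZMod.natCast_eq_zero_iff _ _).mp hzero)
  omega

/-- The interval of size `m` on the chain `C j`. -/
def chainInterval (n : ℕ) (σ : ZMod n ≃ Fin n) (j : ZMod n) (m : ℕ) : Finset (Fin n) :=
  cycInterval n σ (j - ((m / 2 : ℕ) : ZMod n)) (m - 1)

lemma mem_chainC {j : ZMod n} {X : Finset (Fin n)} :
    X ∈ chainC n σ j ↔ ∃ m, (1 ≤ m ∧ m ≤ n - 1) ∧ chainInterval n σ j m = X := by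
  simp only [chainC, chainInterval, mem_image, mem_Icc]

lemma card_chainInterval (j : ZMod n) {m : ℕ} (h₁ : 1 ≤ m) (h₂ : m ≤ n - 1) :
    (chainInterval n σ j m).card = m := by
  rw [chainInterval, card_cycInterval _ (by omega)]
  omega

lemma chainInterval_inj {j j' : ZMod n} {m m' : ℕ} (hm : 1 ≤ m ∧ m ≤ n - 1)
    (hm' : 1 ≤ m' ∧ m' ≤ n - 1) (h : chainInterval n σ j m = chainInterval n σ j' m') :
    j = j' ∧ m = m' := by
  obtain rfl : m = m' := by
    rw [← card_chainInterval j hm.1 hm.2, h, card_chainInterval j' hm'.1 hm'.2]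
  exact ⟨sub_left_injective (cycInterval_left_injective (by omega) h), rfl⟩

lemma chainInterval_mono (j : ZMod n) {m m' : ℕ} (h₁ : 1 ≤ m) (h : m ≤ m') :
    chainInterval n σ j m ⊆ chainInterval n σ j m' := by
  obtain ⟨d, hd⟩ : ∃ d, m' / 2 = m / 2 + d := ⟨m' / 2 - m / 2, by omega⟩
  refine cycInterval_subset_cycInterval d ?_ (by omega)
  rw [hd]
  push_cast
  ring

lemma chainInterval_subset_chainInterval_add_one (j : ZMod n) {m m' : ℕ} (h₁ : 1 ≤ m)
    (h : m / 2 < m' / 2) : chainInterval n σ j m ⊆ chainInterval n σ (j + 1) m' := by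
  obtain ⟨d, hd⟩ : ∃ d, m' / 2 = m / 2 + 1 + d := ⟨m' / 2 - m / 2 - 1, by omega⟩
  refine cycInterval_subset_cycInterval d ?_ (by omega)
  rw [hd]
  push_cast
  ring

lemma chainInterval_add_one_subset_chainInterval (j : ZMod n) {m m' : ℕ} (h₁ : 1 ≤ m)
    (h : (m + 1) / 2 < (m' + 1) / 2) : chainInterval n σ (j + 1) m ⊆ chainInterval n σ j m' := by
  obtain ⟨d, hd⟩ : ∃ d, m' / 2 + 1 = m / 2 + d := ⟨m' / 2 + 1 - m / 2, by omega⟩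
  refine cycInterval_subset_cycInterval d ?_ (by omega)
  have hd' := congrArg (Nat.cast : ℕ → ZMod n) hd
  push_cast at hd'
  linear_combination hd'

def chainSizes (𝒜 : Finset (Finset (Fin n))) (σ : ZMod n ≃ Fin n) (j : ZMod n) : Finset ℕ :=
  (𝒜 ∩ chainC n σ j).image card

lemma mem_chainSizes {𝒜 : Finset (Finset (Fin n))} {j : ZMod n} {m : ℕ} :
    m ∈ chainSizes 𝒜 σ j ↔ (1 ≤ m ∧ m ≤ n - 1) ∧ chainInterval n σ j m ∈ 𝒜 := by
  simp only [chainSizes, mem_image, mem_inter, mem_chainC]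
  constructor
  · rintro ⟨_, ⟨hX, k, hk, rfl⟩, rfl⟩
    rw [card_chainInterval j hk.1 hk.2]
    exact ⟨hk, hX⟩
  · rintro ⟨hm, hX⟩
    exact ⟨_, ⟨hX, m, hm, rfl⟩, card_chainInterval j hm.1 hm.2⟩

lemma card_chainSizes (𝒜 : Finset (Finset (Fin n))) (j : ZMod n) :
    (chainSizes 𝒜 σ j).card = (𝒜 ∩ chainC n σ j).card := by
  refine card_image_of_injOn fun X hX Y hY hXY => ?_
  obtain ⟨k, hk, rfl⟩ := mem_chainC.mp (mem_inter.mp hX).2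
  obtain ⟨l, hl, rfl⟩ := mem_chainC.mp (mem_inter.mp hY).2
  have hkl : k = l := by
    simpa only [card_chainInterval j hk.1 hk.2, card_chainInterval j hl.1 hl.2] using hXY
  rw [hkl]

lemma ContainsSkewButterfly.of_injOn {ι : Type*} {𝒜 : Finset (Finset (Fin n))}
    {f : ι → Finset (Fin n)} {S : Set ι} (hf : S.InjOn f) (hS : S.MapsTo f 𝒜) {a b c d e : ι}
    (hmem : ∀ x ∈ [a, b, c, d, e], x ∈ S) (hnd : [a, b, c, d, e].Nodup)
    (hac : f a ⊆ f c) (had : f a ⊆ f d) (hbc : f b ⊆ f c) (hbd : f b ⊆ f d)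
    (hbe : f b ⊆ f e) (hed : f e ⊆ f d) : ContainsSkewButterfly 𝒜 := by
  simp only [List.mem_cons, List.not_mem_nil, or_false, forall_eq_or_imp, forall_eq] at hmem
  obtain ⟨ha, hb, hc, hd, he⟩ := hmem
  simp only [List.nodup_cons, List.mem_cons, List.not_mem_nil, or_false, not_or,
    List.nodup_nil] at hnd
  obtain ⟨⟨hab, hac', had', hae⟩, ⟨hbc', hbd', hbe'⟩, ⟨hcd, hce⟩, hde, -⟩ := hnd
  exact ⟨f a, f b, f c, f d, f e, hS ha, hS hb, hS hc, hS hd, hS he,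
    (hf.ne_iff ha hb).mpr hab, (hf.ne_iff ha hc).mpr hac', (hf.ne_iff ha hd).mpr had',
    (hf.ne_iff ha he).mpr hae, (hf.ne_iff hb hc).mpr hbc', (hf.ne_iff hb hd).mpr hbd',
    (hf.ne_iff hb he).mpr hbe', (hf.ne_iff hc hd).mpr hcd, (hf.ne_iff hc he).mpr hce,
    (hf.ne_iff hd he).mpr hde, hac, had, hbc, hbd, hbe, hed⟩

lemma Finset.exists_lt_lt_add_three_le {T : Finset ℕ} (hcard : 3 ≤ T.card)
    (hT : ∀ j, T ≠ {j, j + 1, j + 2}) : ∃ a ∈ T, ∃ b ∈ T, ∃ c ∈ T, a < b ∧ b < c ∧ a + 3 ≤ c := by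
  have hne : T.Nonempty := card_pos.mp (by omega)
  have hspread : T.min' hne + 3 ≤ T.max' hne := by
    by_contra! h
    refine hT (T.min' hne) (eq_of_subset_of_card_le (fun x hx => ?_) (card_le_three.trans hcard))
    have := T.min'_le x hx
    have := T.le_max' x hx
    simp only [mem_insert, mem_singleton]
    omega
  obtain ⟨b, hb, hba⟩ := (T.erase (T.min' hne)).exists_mem_ne
    (by rw [card_erase_of_mem (T.min'_mem hne)]; omega) (T.max' hne)
  obtain ⟨hbmin, hb⟩ := mem_erase.mp hb
  exact ⟨_, T.min'_mem hne, b, hb, _, T.max'_mem hne, (T.min'_le b hb).lt_of_ne' hbmin,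
    (T.le_max' b hb).lt_of_ne hba, hspread⟩

variable {𝒜 : Finset (Finset (Fin n))}

lemma containsSkewButterfly_of_mem_chainSizes {i : ZMod n} {s₁ s₂ t₁ t₂ t₃ : ℕ}
    (hs₁ : s₁ ∈ chainSizes 𝒜 σ i) (hs₂ : s₂ ∈ chainSizes 𝒜 σ i) (hs : s₁ < s₂)
    (ht₁ : t₁ ∈ chainSizes 𝒜 σ (i + 1)) (ht₂ : t₂ ∈ chainSizes 𝒜 σ (i + 1))
    (ht₃ : t₃ ∈ chainSizes 𝒜 σ (i + 1)) (ht₁₂ : t₁ < t₂) (ht₂₃ : t₂ < t₃)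
    (ht : t₁ + 3 ≤ t₃ ∨ Even t₁) : ContainsSkewButterfly 𝒜 := by
  obtain ⟨⟨hs₁_pos, -⟩, -⟩ := mem_chainSizes.mp hs₁
  obtain ⟨⟨-, hs₂_le⟩, -⟩ := mem_chainSizes.mp hs₂
  obtain ⟨⟨ht₁_pos, -⟩, -⟩ := mem_chainSizes.mp ht₁
  have hi : i ≠ i + 1 := fun h => by
    have := Nat.le_of_dvd one_pos ((ZMod.natCast_eq_zero_iff 1 n).mp (by simpa using h))
    omega
  let S : Set (ZMod n × ℕ) := {p | p.2 ∈ chainSizes 𝒜 σ p.1}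
  have hinj : S.InjOn fun p => chainInterval n σ p.1 p.2 := fun p hp q hq h =>
    Prod.ext_iff.mpr (chainInterval_inj (mem_chainSizes.mp hp).1 (mem_chainSizes.mp hq).1 h)
  have hmaps : S.MapsTo (fun p => chainInterval n σ p.1 p.2) 𝒜 := fun p hp =>
    (mem_chainSizes.mp hp).2
  rw [Nat.even_iff] at ht
  -- the three ways in which the chains `C i` and `C (i + 1)` can interleave at these sizes
  rcases (by omega : (s₁ / 2 < t₃ / 2 ∧ (t₁ + 1) / 2 < (s₂ + 1) / 2)
      ∨ (s₁ / 2 < t₂ / 2 ∧ s₂ / 2 < t₃ / 2)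
      ∨ ((t₂ + 1) / 2 < (s₂ + 1) / 2 ∧ (t₁ + 1) / 2 < (s₁ + 1) / 2)) with
    ⟨h₁, h₂⟩ | ⟨h₁, h₂⟩ | ⟨h₁, h₂⟩
  · refine ContainsSkewButterfly.of_injOn (a := (i, s₁)) (b := (i + 1, t₁)) (c := (i, s₂))
      (d := (i + 1, t₃)) (e := (i + 1, t₂)) hinj hmaps
      (by simp [S, *]) (by simp [hi, hi.symm]; omega)
      (chainInterval_mono _ hs₁_pos hs.le)
      (chainInterval_subset_chainInterval_add_one _ hs₁_pos h₁)
      (chainInterval_add_one_subset_chainInterval _ ht₁_pos h₂)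
      (chainInterval_mono _ ht₁_pos (by omega))
      (chainInterval_mono _ ht₁_pos ht₁₂.le)
      (chainInterval_mono _ (by omega) ht₂₃.le)
  · refine ContainsSkewButterfly.of_injOn (a := (i + 1, t₁)) (b := (i, s₁)) (c := (i + 1, t₂))
      (d := (i + 1, t₃)) (e := (i, s₂)) hinj hmaps
      (by simp [S, *]) (by simp [hi, hi.symm]; omega)
      (chainInterval_mono _ ht₁_pos ht₁₂.le)
      (chainInterval_mono _ ht₁_pos (by omega))
      (chainInterval_subset_chainInterval_add_one _ hs₁_pos h₁)
      (chainInterval_subset_chainInterval_add_one _ hs₁_pos (by omega))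
      (chainInterval_mono _ hs₁_pos hs.le)
      (chainInterval_subset_chainInterval_add_one _ (by omega) h₂)
  · refine ContainsSkewButterfly.of_injOn (a := (i + 1, t₂)) (b := (i + 1, t₁))
      (c := (i + 1, t₃)) (d := (i, s₂)) (e := (i, s₁)) hinj hmaps
      (by simp [S, *]) (by simp [hi.symm]; omega)
      (chainInterval_mono _ (by omega) ht₂₃.le)
      (chainInterval_add_one_subset_chainInterval _ (by omega) h₁)
      (chainInterval_mono _ ht₁_pos (by omega))
      (chainInterval_add_one_subset_chainInterval _ ht₁_pos (by omega))
      (chainInterval_add_one_subset_chainInterval _ ht₁_pos h₂)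
      (chainInterval_mono _ hs₁_pos hs.le)

end

theorem skew_butterfly_chain_cor1_general (n : ℕ) (σ : ZMod n ≃ Fin n)
    (𝒜 : Finset (Finset (Fin n)))
    (hS : ¬ ContainsSkewButterfly 𝒜) (i : ZMod n)
    (hi : (𝒜 ∩ chainC n σ (i + 1)).card = 4 ∨ Type3L 𝒜 (chainC n σ (i + 1)) ∨
      Type3S 𝒜 (chainC n σ (i + 1))) :
    (𝒜 ∩ chainC n σ i).card ≤ 1 := by
  by_contra! h
  rw [← card_chainSizes] at h
  have hne : (chainSizes 𝒜 σ i).Nonempty := card_pos.mp (by omega)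
  obtain ⟨t₁, ht₁, t₂, ht₂, t₃, ht₃, ht₁₂, ht₂₃, ht⟩ : ∃ t₁ ∈ chainSizes 𝒜 σ (i + 1),
      ∃ t₂ ∈ chainSizes 𝒜 σ (i + 1), ∃ t₃ ∈ chainSizes 𝒜 σ (i + 1),
        t₁ < t₂ ∧ t₂ < t₃ ∧ (t₁ + 3 ≤ t₃ ∨ Even t₁) := by
    rcases hi with h4 | ⟨-, j, hj, hT⟩ | ⟨h3, hT⟩
    · rw [← card_chainSizes] at h4
      obtain ⟨a, ha, b, hb, c, hc, hab, hbc, hac⟩ := exists_lt_lt_add_three_le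
        (T := chainSizes 𝒜 σ (i + 1)) (by omega) fun j hj => by
          have := card_le_three (a := j) (b := j + 1) (c := j + 2)
          rw [← hj] at this
          omega
      exact ⟨a, ha, b, hb, c, hc, hab, hbc, .inl hac⟩
    · change chainSizes 𝒜 σ (i + 1) = _ at hT
      exact ⟨j, by simp [hT], j + 1, by simp [hT], j + 2, by simp [hT], by omega, by omega,
        .inr hj⟩
    · rw [← card_chainSizes] at h3
      obtain ⟨a, ha, b, hb, c, hc, hab, hbc, hac⟩ := exists_lt_lt_add_three_le h3.ge
        fun j hj => hT ⟨j, hj⟩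
      exact ⟨a, ha, b, hb, c, hc, hab, hbc, .inl hac⟩
  exact hS (containsSkewButterfly_of_mem_chainSizes (min'_mem _ hne) (max'_mem _ hne)
    (min'_lt_max'_of_card _ h) ht₁ ht₂ ht₃ ht₁₂ ht₂₃ ht)

/-- If `C (i+1)` is of type `4`, `3^L` or `3^S`, then the previous chain `C i` meets `𝒜`
in at most one set. -/
theorem skew_butterfly_chain_cor1 (n : ℕ) (σ : ZMod n ≃ Fin n)
    (𝒜 : Finset (Finset (Fin n))) (hInt : ∀ I ∈ 𝒜, IsCycInterval n σ I)
    (hS : ¬ ContainsSkewButterfly 𝒜) (i : ZMod n)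
    (hi : (𝒜 ∩ chainC n σ (i + 1)).card = 4 ∨ Type3L 𝒜 (chainC n σ (i + 1)) ∨
      Type3S 𝒜 (chainC n σ (i + 1))) :
    (𝒜 ∩ chainC n σ i).card ≤ 1 :=
  skew_butterfly_chain_cor1_general n σ 𝒜 hS i hi
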